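/- Cross $L^2$ energy estimate for two interfaces: Let $C_\infty \in \mathbb{R}$ and let $f, g : \mathbb{R}^2 \to \mathbb{R}$ be differentiable with $f - C_\infty \in L^2(\mathbb{R}^2)$, $g \in L^2(\mathbb{R}^2)$, $\nabla f$ and $\nabla g$ bounded, and $D := \sup_{x,y} d(f,g)(x,y) < \infty$. Then there is a universal constant $C$ such that $\int_{\mathbb{R}^2} \int_{\mathbb{R}^2} |f(x) - C_\infty| \, |g(x-y)| \, \frac{\big|2|y|^2 - (f(x) - g(x-y))^2\big| + 3|f(x) - g(x-y)| \, |(\nabla f(x) - \nabla g(x-y)) \cdot y|}{[|y|^2 + (f(x) - g(x-y))^2]^{5/2}}\, dx\, dy \le C\, \|f - C_\infty\|_{L^2} \, \|g\|_{L^2} \, \big(\sup_x|\nabla f(x)| + \sup_x|\nabla g(x)| + 1\big) (D^3 + 1)$. -/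

import Mathlib

/-! With `Δ = f(x) - g(x - y)`, the numerator of the kernel is at most
`(2 + 3 (sup |∇f| + sup |∇g|)) (|y|² + Δ²)`, so the kernel is at most that constant times
`d(f,g)³`, and `d(f,g) ≤ min (D, |y|⁻¹) ≤ (1 + D) / (1 + |y|)`. The resulting weight
`(1 + |y|)⁻³` is integrable on `ℝ²`, while for each fixed `y` the `x`-integral of
`|f - C∞| |g(· - y)|` is at most `‖f - C∞‖₂ ‖g‖₂` by Cauchy–Schwarz and translation
invariance. -/

open MeasureTheory Filter Topology Real Set
open scoped RealInnerProductSpace ENNReal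

noncomputable section

abbrev E2 := EuclideanSpace ℝ (Fin 2)

/-- `d(f,g)(x,y) = [|y|² + (f(x)-g(x-y))²]^{-1/2}`. -/
def dd (f g : E2 → ℝ) (x y : E2) : ℝ :=
  (‖y‖ ^ 2 + (f x - g (x - y)) ^ 2) ^ (-(1 / 2 : ℝ))

/-- The `L²(ℝ²)` norm of a function. -/
def l2norm (h : E2 → ℝ) : ℝ := (∫ x : E2, (h x) ^ 2) ^ (1 / 2 : ℝ)

lemma abs_two_mul_sq_sub_sq_add_le {a b I G : ℝ} (hG : 0 ≤ G) (hI : |I| ≤ G * a) :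
    |2 * a ^ 2 - b ^ 2| + 3 * |b| * |I| ≤ (2 + 3 * G) * (a ^ 2 + b ^ 2) := by
  have hab : |b| * a ≤ a ^ 2 + b ^ 2 := by
    nlinarith [sq_nonneg (|b| - a), sq_abs b, abs_nonneg b]
  have hbI : |b| * |I| ≤ G * (a ^ 2 + b ^ 2) :=
    calc |b| * |I| ≤ |b| * (G * a) := by gcongr
      _ = G * (|b| * a) := by ring
      _ ≤ G * (a ^ 2 + b ^ 2) := by gcongr
  have h2 : |2 * a ^ 2 - b ^ 2| ≤ 2 * (a ^ 2 + b ^ 2) := by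
    rw [abs_le]; constructor <;> nlinarith [sq_nonneg a, sq_nonneg b]
  linarith

lemma rpow_neg_half_le_one_add_div {a b D : ℝ} (ha : 0 < a)
    (hD : (a ^ 2 + b ^ 2) ^ (-(1 / 2) : ℝ) ≤ D) :
    (a ^ 2 + b ^ 2) ^ (-(1 / 2) : ℝ) ≤ (1 + D) / (1 + a) := by
  set d := (a ^ 2 + b ^ 2) ^ (-(1 / 2) : ℝ)
  have hda : d * a ≤ 1 := by
    have : d ≤ (a ^ 2) ^ (-(1 / 2) : ℝ) :=
      Real.rpow_le_rpow_of_nonpos (by positivity) (le_add_of_nonneg_right (sq_nonneg b))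
        (by norm_num)
    rw [← Real.rpow_natCast, ← Real.rpow_mul ha.le] at this
    norm_num [Real.rpow_neg_one] at this
    calc d * a ≤ a⁻¹ * a := by gcongr
      _ = 1 := inv_mul_cancel₀ ha.ne'
  rw [le_div_iff₀ (by positivity)]
  linarith

lemma interface_kernel_le {E : Type*} [NormedAddCommGroup E] [InnerProductSpace ℝ E]
    {y w : E} {b G D : ℝ} (hy : y ≠ 0) (hw : ‖w‖ ≤ G)
    (hD : (‖y‖ ^ 2 + b ^ 2) ^ (-(1 / 2) : ℝ) ≤ D) :
    (|2 * ‖y‖ ^ 2 - b ^ 2| + 3 * |b| * |⟪w, y⟫|) / (‖y‖ ^ 2 + b ^ 2) ^ (5 / 2 : ℝ) ≤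
      (2 + 3 * G) * (1 + D) ^ 3 * (1 + ‖y‖) ^ (-3 : ℝ) := by
  have hy0 : 0 < ‖y‖ := norm_pos_iff.mpr hy
  have hS : 0 < ‖y‖ ^ 2 + b ^ 2 := by positivity
  have hnum := abs_two_mul_sq_sub_sq_add_le (b := b) ((norm_nonneg w).trans hw)
    ((abs_real_inner_le_norm w y).trans (by gcongr))
  have hd := rpow_neg_half_le_one_add_div hy0 hD
  calc
    _ ≤ (2 + 3 * G) * (‖y‖ ^ 2 + b ^ 2) / (‖y‖ ^ 2 + b ^ 2) ^ (5 / 2 : ℝ) := by gcongr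
    _ = (2 + 3 * G) * ((‖y‖ ^ 2 + b ^ 2) ^ (-(1 / 2) : ℝ)) ^ 3 := by
      rw [mul_div_assoc, ← Real.rpow_natCast (_ ^ _) 3, ← Real.rpow_mul hS.le]
      congr 1
      rw [div_eq_iff (by positivity), ← Real.rpow_add hS]
      norm_num
    _ ≤ (2 + 3 * G) * ((1 + D) / (1 + ‖y‖)) ^ 3 := by
      have : 0 ≤ 2 + 3 * G := by linarith [norm_nonneg w]
      gcongr
    _ = (2 + 3 * G) * (1 + D) ^ 3 * (1 + ‖y‖) ^ (-3 : ℝ) := by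
      rw [Real.rpow_neg (by positivity), Real.rpow_ofNat, div_pow, div_eq_mul_inv, mul_assoc]

lemma lintegral_enorm_mul_sub_le_eLpNorm_mul {G : Type*} [AddGroup G] [MeasurableSpace G]
    [MeasurableAdd G] (μ : Measure G) [μ.IsAddRightInvariant] {u v : G → ℝ}
    (hu : AEStronglyMeasurable u μ) (hv : AEStronglyMeasurable v μ) (y : G) :
    ∫⁻ x, ‖u x * v (x - y)‖ₑ ∂μ ≤ eLpNorm u 2 μ * eLpNorm v 2 μ := by
  have hy := measurePreserving_sub_right μ y
  have h := eLpNorm_smul_le_mul_eLpNorm (p := 2) (q := 2) (r := 1)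
    (hv.comp_measurePreserving hy) hu
  rwa [eLpNorm_comp_measurePreserving hv hy, eLpNorm_one_eq_lintegral_enorm] at h

lemma l2norm_nonneg (u : E2 → ℝ) : 0 ≤ l2norm u :=
  Real.rpow_nonneg (integral_nonneg fun _ => sq_nonneg _) _

lemma ofReal_l2norm {u : E2 → ℝ} (hu : MemLp u 2) :
    ENNReal.ofReal (l2norm u) = eLpNorm u 2 volume := by
  rw [hu.eLpNorm_eq_integral_rpow_norm two_ne_zero ENNReal.ofNat_ne_top, l2norm]
  norm_num

lemma lintegral_lintegral_le_of_le_kernel_mul {F : E2 → E2 → ℝ} {k u v : E2 → ℝ}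
    (hk : Integrable k) (hk0 : 0 ≤ k) (hu : MemLp u 2) (hv : MemLp v 2)
    (hF : ∀ᵐ y, ∀ x, F y x ≤ k y * (|u x| * |v (x - y)|)) :
    ∫⁻ y, ∫⁻ x, ENNReal.ofReal (F y x) ≤
      ENNReal.ofReal ((∫ y, k y) * l2norm u * l2norm v) := by
  calc ∫⁻ y, ∫⁻ x, ENNReal.ofReal (F y x)
      ≤ ∫⁻ y, ENNReal.ofReal (k y) * (eLpNorm u 2 volume * eLpNorm v 2 volume) := by
        refine lintegral_mono_ae (hF.mono fun y hy => ?_)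
        calc ∫⁻ x, ENNReal.ofReal (F y x)
            ≤ ∫⁻ x, ENNReal.ofReal (k y) * ‖u x * v (x - y)‖ₑ := by
              refine lintegral_mono fun x => (ENNReal.ofReal_le_ofReal (hy x)).trans_eq ?_
              rw [ENNReal.ofReal_mul (hk0 y), ← abs_mul, Real.enorm_eq_ofReal_abs]
          _ = ENNReal.ofReal (k y) * ∫⁻ x, ‖u x * v (x - y)‖ₑ :=
              lintegral_const_mul' _ _ ENNReal.ofReal_ne_top
          _ ≤ _ := by
              gcongr
              exact lintegral_enorm_mul_sub_le_eLpNorm_mul volume hu.1 hv.1 y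
    _ = (∫⁻ y, ENNReal.ofReal (k y)) * (eLpNorm u 2 volume * eLpNorm v 2 volume) :=
        lintegral_mul_const' _ _ (ENNReal.mul_ne_top hu.eLpNorm_ne_top hv.eLpNorm_ne_top)
    _ = ENNReal.ofReal ((∫ y, k y) * l2norm u * l2norm v) := by
        rw [← ofReal_integral_eq_lintegral_ofReal hk (ae_of_all _ hk0), ← ofReal_l2norm hu,
          ← ofReal_l2norm hv, ← ENNReal.ofReal_mul (l2norm_nonneg u),
          ← ENNReal.ofReal_mul (integral_nonneg hk0), mul_assoc]

lemma two_add_three_mul_mul_one_add_pow_three_le {G D : ℝ} (hG : 0 ≤ G) (hD : 0 ≤ D) :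
    (2 + 3 * G) * (1 + D) ^ 3 ≤ 12 * ((G + 1) * (D ^ 3 + 1)) := by
  have hcube : (1 + D) ^ 3 ≤ 4 * (D ^ 3 + 1) := by
    nlinarith [mul_nonneg (sq_nonneg (1 - D)) (by linarith : 0 ≤ 1 + D)]
  calc (2 + 3 * G) * (1 + D) ^ 3 ≤ (3 * (G + 1)) * (4 * (D ^ 3 + 1)) := by
        gcongr; all_goals linarith
    _ = 12 * ((G + 1) * (D ^ 3 + 1)) := by ring

/-- **Cross `L²` energy estimate for two interfaces.**  There is a universal constant `C`
such that whenever `f, g` are differentiable with bounded gradients, `f - C∞ ∈ L²`,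
`g ∈ L²`, and `D = sup d(f,g) < ∞`,
`∫∫ |f(x)-C∞| |g(x-y)| (|2|y|²-(f(x)-g(x-y))²| + 3|f(x)-g(x-y)||(∇f(x)-∇g(x-y))⬝y|) /
    [|y|²+(f(x)-g(x-y))²]^{5/2} dx dy
  ≤ C ‖f-C∞‖_{L²} ‖g‖_{L²} (sup|∇f| + sup|∇g| + 1)(D³+1)`. -/
theorem cross_L2_energy_estimate :
    ∃ C : ℝ, 0 < C ∧ ∀ (Cinf : ℝ) (f g : E2 → ℝ),
      Differentiable ℝ f → Differentiable ℝ g →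
      MemLp (fun x => f x - Cinf) 2 volume →
      MemLp g 2 volume →
      BddAbove (Set.range fun x => ‖gradient f x‖) →
      BddAbove (Set.range fun x => ‖gradient g x‖) →
      BddAbove (Set.range fun p : E2 × E2 => dd f g p.1 p.2) →
      (∫⁻ y : E2, ∫⁻ x : E2, ENNReal.ofReal
          (|f x - Cinf| * |g (x - y)| *
            ((|2 * ‖y‖ ^ 2 - (f x - g (x - y)) ^ 2| +
              3 * |f x - g (x - y)| * |⟪gradient f x - gradient g (x - y), y⟫|) /
              (‖y‖ ^ 2 + (f x - g (x - y)) ^ 2) ^ (5 / 2 : ℝ)))) ≤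
        ENNReal.ofReal (C * l2norm (fun x => f x - Cinf) * l2norm g *
          ((⨆ x : E2, ‖gradient f x‖) + (⨆ x : E2, ‖gradient g x‖) + 1) *
          ((⨆ p : E2 × E2, dd f g p.1 p.2) ^ 3 + 1)) := by
  have hdecay : Integrable (fun y : E2 => (1 + ‖y‖) ^ (-3 : ℝ)) :=
    integrable_one_add_norm (by rw [finrank_euclideanSpace_fin]; norm_num)
  set κ := ∫ y : E2, (1 + ‖y‖) ^ (-3 : ℝ)
  refine ⟨12 * (κ + 1), by positivity, fun Cinf f g _ _ hf hg hbf hbg hbD => ?_⟩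
  set Gf := ⨆ x, ‖gradient f x‖
  set Gg := ⨆ x, ‖gradient g x‖
  set D := ⨆ p : E2 × E2, dd f g p.1 p.2
  have hGf : ∀ x, ‖gradient f x‖ ≤ Gf := le_ciSup hbf
  have hGg : ∀ x, ‖gradient g x‖ ≤ Gg := le_ciSup hbg
  have hD : ∀ x y, dd f g x y ≤ D := fun x y => le_ciSup hbD (x, y)
  have hD0 : 0 ≤ D := (Real.rpow_nonneg (by positivity) _).trans (hD 0 0)
  have hG : 0 ≤ Gf + Gg :=
    add_nonneg ((norm_nonneg _).trans (hGf 0)) ((norm_nonneg _).trans (hGg 0))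
  set c := (2 + 3 * (Gf + Gg)) * (1 + D) ^ 3
  have hc : c ≤ 12 * ((Gf + Gg + 1) * (D ^ 3 + 1)) :=
    two_add_three_mul_mul_one_add_pow_three_le hG hD0
  calc
    _ ≤ ENNReal.ofReal ((∫ y : E2, c * (1 + ‖y‖) ^ (-3 : ℝ)) *
        l2norm (fun x => f x - Cinf) * l2norm g) := by
      refine lintegral_lintegral_le_of_le_kernel_mul (hdecay.const_mul c)
        (fun y => by positivity) hf hg ((volume.ae_ne 0).mono fun y hy x => ?_)
      rw [mul_comm (c * _)]
      gcongr
      exact interface_kernel_le hy ((norm_sub_le _ _).trans (add_le_add (hGf x) (hGg (x - y))))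
        (hD x y)
    _ ≤ _ := by
      refine ENNReal.ofReal_le_ofReal ?_
      rw [integral_const_mul]
      have hf2 := l2norm_nonneg (fun x => f x - Cinf)
      have hg2 := l2norm_nonneg g
      calc c * κ * l2norm (fun x => f x - Cinf) * l2norm g
          ≤ 12 * ((Gf + Gg + 1) * (D ^ 3 + 1)) * (κ + 1) * l2norm (fun x => f x - Cinf) *
              l2norm g := by gcongr; linarith
        _ = _ := by ring
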